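/- arXiv:1106.4730 — 2 statements merged into one kernel-verified Lean document; each statement's English description precedes it below -/
import Mathlib

section
/- Under the same assumptions as the multilevel complexity theorem but with β = 1 (i.e. Var[Ŷ_ℓ] ≤ c₂ N_ℓ^{−1} h_ℓ), there exists c₄ such that for every ε < e^{−1} one can choose L and N_ℓ so that the multilevel estimator achieves mean square error less than ε² with total cost at most c₄ ε^{−2} (log ε)². -/
/-!
The estimator `∑_{ℓ ≤ L} Ŷ_ℓ` has mean `E[P̂_L]` (the level means telescope) and, by independence,
variance `∑_ℓ Var[Ŷ_ℓ]`, so its mean square error is `∑_ℓ Var[Ŷ_ℓ] + (E[P̂_L] - E[P])²`.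
Take the finest level `L` with `2 c₁² h_L ≤ ε²`; since `h_L^{2α} ≤ h_L` for `α ≥ 1/2`, the squared bias
is at most `ε²/2`, while `L = O(|log ε|)` and `h_L⁻¹ = O(ε⁻²)`. With
`N_ℓ = ⌈4 (L+1) c₂ h_ℓ / ε²⌉` every level contributes variance at most `ε² / (4 (L+1))`. Because
`β = 1`, the cost `N_ℓ h_ℓ⁻¹` of level `ℓ` is `4 (L+1) c₂ / ε² + h_ℓ⁻¹`, the same on every level up
to the rounding term, so the total cost is `O((L+1)² ε⁻²) + O(h_L⁻¹) = O(ε⁻² (log ε)²)`.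
-/

open MeasureTheory ProbabilityTheory Finset Real

section MeanSquareError

variable {Ω : Type*} [MeasurableSpace Ω] {μ : Measure Ω} [IsProbabilityMeasure μ]

theorem integral_sub_const_sq_eq_variance_add {X : Ω → ℝ} (hX : MemLp X 2 μ) (m : ℝ) :
    ∫ ω, (X ω - m) ^ 2 ∂μ = variance X μ + (μ[X] - m) ^ 2 := by
  have hXm : MemLp (fun ω => X ω - m) 2 μ := hX.sub (memLp_const m)
  rw [← variance_sub_const hX.aestronglyMeasurable m, variance_eq_sub hXm,
    integral_sub (hX.integrable one_le_two) (integrable_const m), integral_const, probReal_univ,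
    one_smul]
  simp only [Pi.pow_apply]
  ring

theorem integral_sum_sub_const_sq_of_iIndepFun {ι : Type*} {Y : ι → Ω → ℝ}
    (hY : ∀ i, MemLp (Y i) 2 μ) (hindep : iIndepFun Y μ) (s : Finset ι) (m : ℝ) :
    ∫ ω, (∑ i ∈ s, Y i ω - m) ^ 2 ∂μ = ∑ i ∈ s, variance (Y i) μ + (∑ i ∈ s, μ[Y i] - m) ^ 2 := by
  have hsum : MemLp (∑ i ∈ s, Y i) 2 μ := memLp_finsetSum' _ fun i _ => hY i
  have key := integral_sub_const_sq_eq_variance_add hsum m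
  simp only [Finset.sum_apply] at key
  rw [key, IndepFun.variance_sum (fun i _ => hY i) fun i _ j _ hij => hindep.indepFun hij,
    integral_finsetSum s fun i _ => (hY i).integrable one_le_two]

end MeanSquareError

theorem sum_range_succ_eq_of_telescoping {M : Type*} [AddCommGroup M] {a b : ℕ → M}
    (h0 : a 0 = b 0) (h : ∀ ℓ, 1 ≤ ℓ → a ℓ = b ℓ - b (ℓ - 1)) (L : ℕ) :
    ∑ ℓ ∈ range (L + 1), a ℓ = b L := by
  induction L with
  | zero => simp [h0]
  | succ L ih => rw [sum_range_succ, ih, h (L + 1) L.succ_pos, Nat.add_sub_cancel]; abel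

theorem sq_mul_rpow_le_mul_of_le_one {c x α : ℝ} (hx0 : 0 < x) (hx1 : x ≤ 1) (hα : 1 / 2 ≤ α) :
    (c * x ^ α) ^ 2 ≤ c ^ 2 * x := by
  rw [mul_pow, ← rpow_natCast (x ^ α), ← rpow_mul hx0.le]
  gcongr
  simpa using rpow_le_rpow_of_exponent_ge hx0 hx1 (by push_cast; linarith : (1 : ℝ) ≤ α * (2 : ℕ))

theorem sum_mul_inv_natCeil_le {v : ℕ → ℝ} {δ : ℝ} (n : ℕ) (hv : ∀ i, 0 < v i) (hδ : 0 < δ) :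
    ∑ i ∈ range n, v i * (⌈n * v i / δ⌉₊ : ℝ)⁻¹ ≤ δ := by
  rcases n.eq_zero_or_pos with rfl | hn
  · simpa using hδ.le
  have hterm : ∀ i, v i * (⌈n * v i / δ⌉₊ : ℝ)⁻¹ ≤ δ / n := fun i => by
    have hx : 0 < n * v i / δ := by have := hv i; positivity
    calc v i * (⌈n * v i / δ⌉₊ : ℝ)⁻¹ ≤ v i * (n * v i / δ)⁻¹ :=
          mul_le_mul_of_nonneg_left (inv_anti₀ hx (Nat.le_ceil _)) (hv i).le
      _ = δ / n := by have := hv i; field_simp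
  calc ∑ i ∈ range n, v i * (⌈n * v i / δ⌉₊ : ℝ)⁻¹ ≤ ∑ _i ∈ range n, δ / n :=
        sum_le_sum fun i _ => hterm i
    _ = δ := by rw [sum_const, card_range, nsmul_eq_mul]; field_simp

theorem sum_natCeil_mul_le {v w : ℕ → ℝ} {δ : ℝ} (n : ℕ) (hv : ∀ i, 0 ≤ v i) (hw : ∀ i, 0 ≤ w i)
    (hδ : 0 < δ) :
    ∑ i ∈ range n, (⌈n * v i / δ⌉₊ : ℝ) * w i ≤ n * ∑ i ∈ range n, v i * w i / δ +
      ∑ i ∈ range n, w i := by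
  rw [mul_sum, ← sum_add_distrib]
  refine sum_le_sum fun i _ => ?_
  have hx : 0 ≤ n * v i / δ := by have := hv i; positivity
  calc (⌈n * v i / δ⌉₊ : ℝ) * w i ≤ (n * v i / δ + 1) * w i :=
        mul_le_mul_of_nonneg_right (Nat.ceil_lt_add_one hx).le (hw i)
    _ = n * (v i * w i / δ) + w i := by ring

theorem sum_range_inv_div_two_pow_le {T : ℝ} (hT : 0 < T) (n : ℕ) :
    ∑ ℓ ∈ range n, (T / 2 ^ ℓ)⁻¹ ≤ 2 ^ n / T := by
  simp_rw [inv_div, ← sum_div]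
  gcongr
  have := geom_sum_eq (by norm_num : (2 : ℝ) ≠ 1) n
  norm_num at this
  linarith

theorem mlmc_cost_le {T c₂ c₃ δ : ℝ} (hT : 0 < T) (hc₂ : 0 ≤ c₂) (hc₃ : 0 ≤ c₃) (hδ : 0 < δ)
    (n : ℕ) :
    ∑ ℓ ∈ range n, c₃ * ⌈n * (c₂ * (T / 2 ^ ℓ)) / δ⌉₊ * (T / 2 ^ ℓ)⁻¹ ≤
      c₂ * c₃ * n ^ 2 / δ + c₃ * 2 ^ n / T := by
  have hcost := sum_natCeil_mul_le n (v := fun ℓ => c₂ * (T / 2 ^ ℓ))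
    (w := fun ℓ => c₃ * (T / 2 ^ ℓ)⁻¹) (fun _ => by positivity) (fun _ => by positivity) hδ
  have hvw : ∀ ℓ : ℕ, c₂ * (T / 2 ^ ℓ) * (c₃ * (T / 2 ^ ℓ)⁻¹) / δ = c₂ * c₃ / δ := fun ℓ => by
    field_simp
  simp only [hvw, sum_const, card_range, nsmul_eq_mul, ← mul_sum] at hcost
  calc ∑ ℓ ∈ range n, c₃ * ⌈n * (c₂ * (T / 2 ^ ℓ)) / δ⌉₊ * (T / 2 ^ ℓ)⁻¹
      = ∑ ℓ ∈ range n, (⌈n * (c₂ * (T / 2 ^ ℓ)) / δ⌉₊ : ℝ) * (c₃ * (T / 2 ^ ℓ)⁻¹) :=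
        sum_congr rfl fun _ _ => by ring
    _ ≤ n * (n * (c₂ * c₃ / δ)) + c₃ * ∑ ℓ ∈ range n, (T / 2 ^ ℓ)⁻¹ := hcost
    _ ≤ n * (n * (c₂ * c₃ / δ)) + c₃ * (2 ^ n / T) := by
        gcongr; exact sum_range_inv_div_two_pow_le hT n
    _ = c₂ * c₃ * n ^ 2 / δ + c₃ * 2 ^ n / T := by ring

theorem exists_two_pow_between (x : ℝ) : ∃ L : ℕ, x ≤ 2 ^ L ∧ (2 : ℝ) ^ L ≤ max 1 (2 * x) := by
  rcases le_or_gt x 1 with hx | hx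
  · exact ⟨0, by simpa using hx, by simp⟩
  · obtain ⟨n, hn, hxn⟩ := exists_nat_pow_near hx.le one_lt_two
    exact ⟨n + 1, hxn.le, le_max_of_le_right (by rw [pow_succ']; linarith)⟩

theorem natCast_add_one_le_mul_neg_log {C ε : ℝ} {L : ℕ} (hC : 1 ≤ C) (hε : 0 < ε)
    (hlogε : log ε ≤ -1) (hL : (2 : ℝ) ^ L ≤ C / ε ^ 2) :
    (L : ℝ) + 1 ≤ ((log C + 2) / log 2 + 1) * -log ε := by
  have hlog2 : 0 < log 2 := log_pos one_lt_two
  have hlogC : 0 ≤ log C := log_nonneg hC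
  have hlogL : L * log 2 ≤ log C - 2 * log ε := by
    have := log_le_log (by positivity) hL
    rwa [log_pow, log_div (by positivity) (by positivity), log_pow] at this
  have hL : (L : ℝ) ≤ (log C + 2) / log 2 * -log ε := by
    rw [div_mul_eq_mul_div, le_div_iff₀ hlog2]
    nlinarith
  linarith

theorem exists_two_pow_le_div_sq {T a ε : ℝ} (hT : 0 < T) (ha : 0 ≤ a) (hε : 0 < ε)
    (hε1 : ε ≤ 1) :
    ∃ L : ℕ, T ≤ 2 ^ L ∧ a * T ≤ ε ^ 2 * 2 ^ L ∧ (2 : ℝ) ^ L ≤ (1 + 2 * T * (1 + a)) / ε ^ 2 := by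
  obtain ⟨L, hxL, hLx⟩ := exists_two_pow_between (T * (1 + a) / ε ^ 2)
  have hε2 : 0 < ε ^ 2 := by positivity
  have hε21 : ε ^ 2 ≤ 1 := pow_le_one₀ hε.le hε1
  rw [div_le_iff₀ hε2] at hxL
  refine ⟨L, by nlinarith, by nlinarith, hLx.trans (max_le ?_ ?_)⟩
  · rw [le_div_iff₀ hε2]; nlinarith
  · rw [mul_div_assoc', ← mul_assoc]; gcongr; linarith

theorem exists_finest_level {T a : ℝ} (hT : 0 < T) (ha : 0 ≤ a) :
    ∃ C K : ℝ, 0 < C ∧ 0 < K ∧ ∀ ε, 0 < ε → log ε ≤ -1 → ∃ L : ℕ,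
      T / 2 ^ L ≤ 1 ∧ a * (T / 2 ^ L) ≤ ε ^ 2 ∧ ((L : ℝ) + 1) ^ 2 ≤ K * log ε ^ 2 ∧
        (2 : ℝ) ^ (L + 1) ≤ C * log ε ^ 2 / ε ^ 2 := by
  set C₀ := 1 + 2 * T * (1 + a)
  have hC₀ : 1 ≤ C₀ := by nlinarith
  set K₀ := (log C₀ + 2) / log 2 + 1
  have hK₀ : 0 < K₀ := by have := log_nonneg hC₀; have := log_pos one_lt_two; positivity
  refine ⟨2 * C₀, K₀ ^ 2, by positivity, by positivity, fun ε hε hlogε => ?_⟩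
  have hε1 : ε ≤ 1 := by
    by_contra! h; linarith [log_pos h]
  have hlog_sq : 1 ≤ log ε ^ 2 := by nlinarith
  obtain ⟨L, hTL, haL, hLC⟩ := exists_two_pow_le_div_sq hT ha hε hε1
  have h2L : (0 : ℝ) < 2 ^ L := by positivity
  refine ⟨L, (div_le_one h2L).2 hTL, ?_, ?_, ?_⟩
  · rwa [mul_div_assoc', div_le_iff₀ h2L]
  · calc ((L : ℝ) + 1) ^ 2 ≤ (K₀ * -log ε) ^ 2 := by
          gcongr; exact natCast_add_one_le_mul_neg_log hC₀ hε hlogε hLC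
      _ = K₀ ^ 2 * log ε ^ 2 := by ring
  · calc (2 : ℝ) ^ (L + 1) ≤ 2 * C₀ / ε ^ 2 := by rw [pow_succ', mul_div_assoc]; gcongr
      _ ≤ 2 * C₀ * log ε ^ 2 / ε ^ 2 :=
          div_le_div_of_nonneg_right (le_mul_of_one_le_right (by positivity) hlog_sq) (sq_nonneg ε)

theorem mlmc_complexity_beta_eq_one_general
    {Ω : Type*} [MeasurableSpace Ω] (μ : Measure Ω) [IsProbabilityMeasure μ]
    (T : ℝ) (hT : 0 < T)
    (P : Ω → ℝ)
    (Phat : ℕ → Ω → ℝ) (hPhatint : ∀ ℓ, Integrable (Phat ℓ) μ)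
    (Y : ℕ → ℕ → Ω → ℝ)   -- `Y ℓ N` : the estimator `Ŷ_ℓ` built from `N` samples
    (h : ℕ → ℝ) (hh : ∀ ℓ, h ℓ = T / 2 ^ ℓ)
    (c₁ c₂ c₃ α β : ℝ) (hc₂ : 0 < c₂) (hc₃ : 0 < c₃)
    (hα : (1:ℝ)/2 ≤ α) (hβ : β = 1)
    (hYint : ∀ ℓ N, MemLp (Y ℓ N) 2 μ)
    (hindep : ∀ N : ℕ → ℕ, iIndepFun (fun ℓ => Y ℓ (N ℓ)) μ)
    (hbias : ∀ ℓ, |(∫ ω, Phat ℓ ω ∂μ) - ∫ ω, P ω ∂μ| ≤ c₁ * h ℓ ^ α)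
    (hmean0 : ∀ N, ∫ ω, Y 0 N ω ∂μ = ∫ ω, Phat 0 ω ∂μ)
    (hmean : ∀ ℓ N, 1 ≤ ℓ → ∫ ω, Y ℓ N ω ∂μ = ∫ ω, (Phat ℓ ω - Phat (ℓ - 1) ω) ∂μ)
    (hvar : ∀ ℓ N, 0 < N → variance (Y ℓ N) μ ≤ c₂ * (N : ℝ)⁻¹ * h ℓ ^ β) :
    ∃ c₄ : ℝ, 0 < c₄ ∧ ∀ ε : ℝ, 0 < ε → ε < Real.exp (-1) →
      ∃ (L : ℕ) (N : ℕ → ℕ), (∀ ℓ ≤ L, 0 < N ℓ) ∧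
        (∫ ω, ((∑ ℓ ∈ Finset.range (L + 1), Y ℓ (N ℓ) ω) - ∫ ω', P ω' ∂μ) ^ 2 ∂μ < ε ^ 2) ∧
        ∑ ℓ ∈ Finset.range (L + 1), c₃ * (N ℓ : ℝ) * (h ℓ)⁻¹ ≤ c₄ * ε ^ (-2 : ℝ) * Real.log ε ^ 2 := by
  subst hβ
  obtain rfl : h = fun ℓ => T / 2 ^ ℓ := funext hh
  obtain ⟨C, K, hC, hK, hlevel⟩ := exists_finest_level hT (by positivity : (0 : ℝ) ≤ 2 * c₁ ^ 2)
  refine ⟨4 * c₂ * c₃ * K + c₃ * C / T, by positivity, fun ε hε hεe => ?_⟩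
  have hlogε : log ε ≤ -1 := by simpa using (log_lt_log hε hεe).le
  obtain ⟨L, hhL, hbiasL, hLK, h2LC⟩ := hlevel ε hε hlogε
  have hδ : 0 < ε ^ 2 / 4 := by positivity
  set N : ℕ → ℕ := fun ℓ => ⌈((L + 1 : ℕ) : ℝ) * (c₂ * (T / 2 ^ ℓ)) / (ε ^ 2 / 4)⌉₊
  have hN : ∀ ℓ, 0 < N ℓ := fun ℓ => Nat.ceil_pos.2 (by positivity)
  refine ⟨L, N, fun ℓ _ => hN ℓ, ?_, ?_⟩
  · have hvar_sum : ∑ ℓ ∈ range (L + 1), variance (Y ℓ (N ℓ)) μ ≤ ε ^ 2 / 4 :=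
      (sum_le_sum fun ℓ _ => (hvar ℓ (N ℓ) (hN ℓ)).trans_eq (by rw [rpow_one, mul_right_comm])).trans
        (sum_mul_inv_natCeil_le (L + 1) (fun ℓ => by positivity) hδ)
    have hbias_sq : (∫ ω, Phat L ω ∂μ - ∫ ω, P ω ∂μ) ^ 2 ≤ ε ^ 2 / 2 := calc
      _ ≤ (c₁ * (T / 2 ^ L) ^ α) ^ 2 := sq_le_sq' (abs_le.1 (hbias L)).1 (abs_le.1 (hbias L)).2
      _ ≤ c₁ ^ 2 * (T / 2 ^ L) := sq_mul_rpow_le_mul_of_le_one (by positivity) hhL hα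
      _ ≤ ε ^ 2 / 2 := by linarith
    have hmeans := sum_range_succ_eq_of_telescoping (hmean0 _)
      (fun ℓ hℓ => (hmean ℓ (N ℓ) hℓ).trans (integral_sub (hPhatint _) (hPhatint _))) L
    rw [integral_sum_sub_const_sq_of_iIndepFun (fun ℓ => hYint ℓ (N ℓ)) (hindep N), hmeans]
    linarith [pow_pos hε 2]
  · calc _ ≤ c₂ * c₃ * ((L + 1 : ℕ) : ℝ) ^ 2 / (ε ^ 2 / 4) + c₃ * 2 ^ (L + 1) / T :=
          mlmc_cost_le hT hc₂.le hc₃.le hδ (L + 1)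
      _ ≤ c₂ * c₃ * (K * log ε ^ 2) / (ε ^ 2 / 4) + c₃ * (C * log ε ^ 2 / ε ^ 2) / T := by
          push_cast; gcongr
      _ = _ := by rw [rpow_neg hε.le, rpow_two]; field_simp

/-- Multilevel Monte Carlo complexity theorem, case `β = 1`:
with bias `|E[P̂_ℓ − P]| ≤ c₁ h_ℓ^α` (`α ≥ 1/2`), independent unbiased level estimators
`Ŷ_ℓ` based on `N_ℓ` samples with `Var[Ŷ_ℓ] ≤ c₂ N_ℓ⁻¹ h_ℓ^β` (`β = 1`), and level cost
`c₃ N_ℓ h_ℓ⁻¹`, there is `c₄` such that for every `ε < e⁻¹` one can choose `L` and `N_ℓ`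
so that the combined estimator has mean square error below `ε²` at total cost `≤ c₄ ε⁻² (log ε)²`. -/
theorem mlmc_complexity_beta_eq_one
    {Ω : Type*} [MeasurableSpace Ω] (μ : Measure Ω) [IsProbabilityMeasure μ]
    (T : ℝ) (hT : 0 < T)
    (P : Ω → ℝ) (hPint : Integrable P μ)
    (Phat : ℕ → Ω → ℝ) (hPhatint : ∀ ℓ, Integrable (Phat ℓ) μ)
    (Y : ℕ → ℕ → Ω → ℝ)   -- `Y ℓ N` : the estimator `Ŷ_ℓ` built from `N` samples
    (h : ℕ → ℝ) (hh : ∀ ℓ, h ℓ = T / 2 ^ ℓ)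
    (c₁ c₂ c₃ α β : ℝ) (hc₁ : 0 < c₁) (hc₂ : 0 < c₂) (hc₃ : 0 < c₃)
    (hα : (1:ℝ)/2 ≤ α) (hβ : β = 1)
    (hYint : ∀ ℓ N, MemLp (Y ℓ N) 2 μ)
    (hindep : ∀ N : ℕ → ℕ, iIndepFun (fun ℓ => Y ℓ (N ℓ)) μ)
    (hbias : ∀ ℓ, |(∫ ω, Phat ℓ ω ∂μ) - ∫ ω, P ω ∂μ| ≤ c₁ * h ℓ ^ α)
    (hmean0 : ∀ N, ∫ ω, Y 0 N ω ∂μ = ∫ ω, Phat 0 ω ∂μ)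
    (hmean : ∀ ℓ N, 1 ≤ ℓ → ∫ ω, Y ℓ N ω ∂μ = ∫ ω, (Phat ℓ ω - Phat (ℓ - 1) ω) ∂μ)
    (hvar : ∀ ℓ N, 0 < N → variance (Y ℓ N) μ ≤ c₂ * (N : ℝ)⁻¹ * h ℓ ^ β) :
    ∃ c₄ : ℝ, 0 < c₄ ∧ ∀ ε : ℝ, 0 < ε → ε < Real.exp (-1) →
      ∃ (L : ℕ) (N : ℕ → ℕ), (∀ ℓ ≤ L, 0 < N ℓ) ∧
        (∫ ω, ((∑ ℓ ∈ Finset.range (L + 1), Y ℓ (N ℓ) ω) - ∫ ω', P ω' ∂μ) ^ 2 ∂μ < ε ^ 2) ∧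
        ∑ ℓ ∈ Finset.range (L + 1), c₃ * (N ℓ : ℝ) * (h ℓ)⁻¹ ≤ c₄ * ε ^ (-2 : ℝ) * Real.log ε ^ 2 :=
  mlmc_complexity_beta_eq_one_general μ T hT P Phat hPhatint Y h hh c₁ c₂ c₃ α β hc₂ hc₃ hα hβ hYint
    hindep hbias hmean0 hmean hvar
end

section
/- Under the same assumptions as the multilevel complexity theorem but with 0 < β < 1, there exists c₄ such that for every ε < e^{−1} the multilevel estimator can achieve mean square error less than ε² with total computational cost at most c₄ ε^{−2−(1−β)/α}. -/
/-!
The bias forces the finest level `L` to satisfy `c₁ h_L^α ≤ ε/2`; taking the first such level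
of the halving sequence `h_ℓ = T 2^{-ℓ}` also gives `h_L ≳ ε^{1/α}`. Given `L`, the sample sizes
`N_ℓ ∝ √(V_ℓ / C_ℓ)` (variance `V_ℓ = c₂ h_ℓ^β`, cost `C_ℓ = c₃ h_ℓ⁻¹` per sample) bring the
variance of the estimator down to `ε²/4` at cost `≈ 4 ε⁻² (∑_ℓ √(V_ℓ C_ℓ))² + ∑_ℓ C_ℓ`. Since
`√(V_ℓ C_ℓ) ∝ h_ℓ^{-(1-β)/2}` grows geometrically in `ℓ` when `β < 1`, both sums are dominated by
their last term, and `ε⁻² h_L^{-(1-β)} ≲ ε^{-2-(1-β)/α}`.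
-/

open MeasureTheory ProbabilityTheory Finset

theorem sum_range_succ_of_telescoping {G : Type*} [AddCommGroup G] {g m : ℕ → G}
    (h0 : m 0 = g 0) (hsucc : ∀ ℓ, m (ℓ + 1) = g (ℓ + 1) - g ℓ) (L : ℕ) :
    ∑ ℓ ∈ range (L + 1), m ℓ = g L := by
  induction L with
  | zero => simpa using h0
  | succ L ih => rw [sum_range_succ, ih, hsucc, add_sub_cancel]

section

variable {Ω : Type*} [MeasurableSpace Ω] {μ : Measure Ω} [IsProbabilityMeasure μ]

theorem integral_sub_const_sq {S : Ω → ℝ} (hS : MemLp S 2 μ) (c : ℝ) :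
    ∫ ω, (S ω - c) ^ 2 ∂μ = Var[S; μ] + (μ[S] - c) ^ 2 := by
  have hvar := variance_eq_sub (hS.sub (memLp_const c))
  rw [show S - (fun _ ↦ c) = fun ω ↦ S ω - c from rfl,
    variance_sub_const hS.aestronglyMeasurable, integral_sub (hS.integrable one_le_two)
    (integrable_const c)] at hvar
  simp only [integral_const, probReal_univ, smul_eq_mul, one_mul] at hvar
  rw [hvar]
  simp only [Pi.pow_apply, sub_add_cancel]

theorem integral_sum_sub_const_sq_of_iIndepFun_s3 {X : ℕ → Ω → ℝ} {p : ℕ → ℝ}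
    (hX : ∀ ℓ, MemLp (X ℓ) 2 μ) (hindep : iIndepFun X μ) (hmean0 : μ[X 0] = p 0)
    (hmean : ∀ ℓ, μ[X (ℓ + 1)] = p (ℓ + 1) - p ℓ) (c : ℝ) (L : ℕ) :
    ∫ ω, (∑ ℓ ∈ range (L + 1), X ℓ ω - c) ^ 2 ∂μ
      = ∑ ℓ ∈ range (L + 1), Var[X ℓ; μ] + (p L - c) ^ 2 := by
  rw [integral_sub_const_sq (memLp_finsetSum _ fun ℓ _ ↦ hX ℓ),
    integral_finsetSum _ fun ℓ _ ↦ (hX ℓ).integrable one_le_two,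
    sum_range_succ_of_telescoping hmean0 hmean, ← IndepFun.variance_sum (fun ℓ _ ↦ hX ℓ)
    fun i _ j _ hij ↦ hindep.indepFun hij]
  congr 2
  ext ω
  simp only [Finset.sum_apply]

end

theorem sum_range_succ_le_div_of_le_mul {a : ℕ → ℝ} {r : ℝ} (hr0 : 0 ≤ r) (hr1 : r < 1)
    (ha0 : 0 ≤ a 0) (ha : ∀ ℓ, a ℓ ≤ r * a (ℓ + 1)) (L : ℕ) :
    ∑ ℓ ∈ range (L + 1), a ℓ ≤ a L / (1 - r) := by
  have h1r : 0 < 1 - r := sub_pos.2 hr1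
  induction L with
  | zero => simpa using le_div_self ha0 h1r (by linarith)
  | succ L ih =>
    rw [sum_range_succ, le_div_iff₀ h1r]
    rw [le_div_iff₀ h1r] at ih
    nlinarith [ha L]

theorem sum_range_succ_div_two_pow_rpow_le {T q : ℝ} (hT : 0 < T) (hq : q < 0) (L : ℕ) :
    ∑ ℓ ∈ range (L + 1), (T / 2 ^ ℓ) ^ q ≤ (T / 2 ^ L) ^ q / (1 - 2 ^ q) := by
  refine sum_range_succ_le_div_of_le_mul (by positivity)
    (Real.rpow_lt_one_of_one_lt_of_neg one_lt_two hq) (by positivity) (fun ℓ ↦ le_of_eq ?_) L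
  rw [← Real.mul_rpow zero_le_two (by positivity), pow_succ, ← div_div,
    mul_div_cancel₀ _ two_ne_zero]

theorem exists_div_two_pow_le {T δ : ℝ} (hT : 0 < T) (hδ : 0 < δ) :
    ∃ L : ℕ, T / 2 ^ L ≤ δ ∧ min T (δ / 2) ≤ T / 2 ^ L := by
  classical
  have hex : ∃ L : ℕ, T / 2 ^ L ≤ δ := by
    obtain ⟨L, hL⟩ := exists_pow_lt_of_lt_one (div_pos hδ hT) (by norm_num : (1 / 2 : ℝ) < 1)
    refine ⟨L, ?_⟩
    rw [div_pow, one_pow, lt_div_iff₀ hT] at hL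
    rw [div_eq_mul_one_div]
    linarith
  refine ⟨Nat.find hex, Nat.find_spec hex, ?_⟩
  rcases h : Nat.find hex with _ | L
  · simp
  · have hL : δ < T / 2 ^ L := not_le.1 (Nat.find_min hex (by omega))
    refine min_le_of_right_le ?_
    rw [pow_succ, ← div_div]
    linarith

theorem exists_level_bias_le_half {T c₁ α : ℝ} (hT : 0 < T) (hc₁ : 0 < c₁) (hα : 0 < α) :
    ∃ κ > 0, ∀ ε, 0 < ε → ε ≤ 1 →
      ∃ L : ℕ, c₁ * (T / 2 ^ L) ^ α ≤ ε / 2 ∧ κ * ε ^ α⁻¹ ≤ T / 2 ^ L := by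
  refine ⟨min T (((2 * c₁) ^ α⁻¹)⁻¹ / 2), by positivity, fun ε hε hε1 ↦ ?_⟩
  obtain ⟨L, hLδ, hδL⟩ :=
    exists_div_two_pow_le hT (show 0 < (ε / (2 * c₁)) ^ α⁻¹ by positivity)
  refine ⟨L, ?_, le_trans ?_ hδL⟩
  · calc c₁ * (T / 2 ^ L) ^ α ≤ c₁ * ((ε / (2 * c₁)) ^ α⁻¹) ^ α := by gcongr
      _ = ε / 2 := by
        rw [Real.rpow_inv_rpow (by positivity) hα.ne']
        field_simp
  · have hεα : ε ^ α⁻¹ ≤ 1 := Real.rpow_le_one hε.le hε1 (by positivity)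
    rw [min_mul_of_nonneg _ _ (by positivity), Real.div_rpow hε.le (by positivity)]
    refine min_le_min (by nlinarith) (le_of_eq ?_)
    ring

theorem exists_sample_sizes {ι : Type*} (s : Finset ι) {v C : ι → ℝ} (hv : ∀ i ∈ s, 0 < v i)
    (hC : ∀ i ∈ s, 0 < C i) {ε : ℝ} (hε : 0 < ε) :
    ∃ N : ι → ℕ, (∀ i, 0 < N i) ∧ ∑ i ∈ s, v i / N i ≤ ε ^ 2 / 4 ∧
      ∑ i ∈ s, (N i : ℝ) * C i ≤ 4 / ε ^ 2 * (∑ i ∈ s, √(v i * C i)) ^ 2 + ∑ i ∈ s, C i := by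
  rcases s.eq_empty_or_nonempty with rfl | ⟨i₀, hi₀⟩
  · exact ⟨fun _ ↦ 1, fun _ ↦ one_pos, by simp only [sum_empty]; positivity, by simp⟩
  set S := ∑ i ∈ s, √(v i * C i)
  have hsqrt : ∀ i ∈ s, 0 < √(v i * C i) := fun i hi ↦
    Real.sqrt_pos.2 (mul_pos (hv i hi) (hC i hi))
  have hS : 0 < S := sum_pos hsqrt ⟨i₀, hi₀⟩
  -- `x i = 4 ε⁻² S √(v i / C i)` minimises the cost subject to variance `ε² / 4`
  set x : ι → ℝ := fun i ↦ 4 / ε ^ 2 * S * √(v i * C i) / C i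
  have hx : ∀ i ∈ s, 0 < x i := fun i hi ↦ by
    have := hsqrt i hi; have := hC i hi
    positivity
  refine ⟨fun i ↦ ⌊x i⌋₊ + 1, fun i ↦ Nat.succ_pos _, ?_, ?_⟩
  · calc ∑ i ∈ s, v i / (⌊x i⌋₊ + 1 : ℕ) ≤ ∑ i ∈ s, v i / x i := by
          refine sum_le_sum fun i hi ↦ ?_
          gcongr
          · exact (hv i hi).le
          · exact hx i hi
          · push_cast; exact (Nat.lt_floor_add_one _).le
      _ = ∑ i ∈ s, ε ^ 2 / (4 * S) * √(v i * C i) := by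
          refine sum_congr rfl fun i hi ↦ ?_
          have := hsqrt i hi; have := hC i hi
          rw [← Real.div_sqrt (x := v i * C i)]
          simp only [x]
          field_simp
      _ = ε ^ 2 / 4 := by
          rw [← mul_sum, div_mul_eq_mul_div, mul_div_mul_right _ _ hS.ne']
  · calc ∑ i ∈ s, ((⌊x i⌋₊ + 1 : ℕ) : ℝ) * C i ≤ ∑ i ∈ s, (x i + 1) * C i := by
          refine sum_le_sum fun i hi ↦ ?_
          gcongr
          · exact (hC i hi).le
          · push_cast; exact add_le_add_left (Nat.floor_le (hx i hi).le) 1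
      _ = ∑ i ∈ s, (4 / ε ^ 2 * S * √(v i * C i) + C i) := by
          refine sum_congr rfl fun i hi ↦ ?_
          have := hC i hi
          simp only [x]
          field_simp
      _ = _ := by rw [sum_add_distrib, ← mul_sum]; ring

theorem sqrt_mul_rpow_mul_inv {c₂ c₃ h β : ℝ} (hh : 0 < h) :
    √(c₂ * h ^ β * (c₃ * h⁻¹)) = √(c₂ * c₃) * h ^ ((β - 1) / 2) := by
  rw [show c₂ * h ^ β * (c₃ * h⁻¹) = c₂ * c₃ * h ^ (β - 1) by
      rw [Real.rpow_sub_one hh.ne']; ring,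
    Real.sqrt_mul' _ (by positivity), Real.sqrt_eq_rpow (h ^ (β - 1)), ← Real.rpow_mul hh.le]
  ring_nf

theorem div_sq_mul_rpow_add_mul_inv_le {κ ε α β h A B : ℝ} (hκ : 0 < κ) (hε : 0 < ε)
    (hε1 : ε ≤ 1) (hα : 1 / 2 ≤ α) (hβ : β < 1) (hA : 0 ≤ A) (hB : 0 ≤ B)
    (hh : κ * ε ^ α⁻¹ ≤ h) :
    A / ε ^ 2 * h ^ (β - 1) + B * h⁻¹ ≤ (A * κ ^ (β - 1) + B * κ⁻¹) * ε ^ (-2 - (1 - β) / α) := by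
  have hα0 : 0 < α := by linarith
  have hu : 0 < κ * ε ^ α⁻¹ := by positivity
  have hpow : h ^ (β - 1) ≤ κ ^ (β - 1) * ε ^ ((β - 1) / α) := by
    refine (Real.rpow_le_rpow_of_nonpos hu hh (by linarith)).trans_eq ?_
    rw [Real.mul_rpow hκ.le (by positivity), ← Real.rpow_mul hε.le]
    ring_nf
  have hinv : h⁻¹ ≤ κ⁻¹ * ε ^ (-2 - (1 - β) / α) := by
    refine (inv_anti₀ hu hh).trans ?_
    rw [mul_inv, ← Real.rpow_neg hε.le]
    refine mul_le_mul_of_nonneg_left (Real.rpow_le_rpow_of_exponent_ge hε hε1 ?_) (by positivity)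
    have : β / α ≤ 2 := by rw [div_le_iff₀ hα0]; linarith
    rw [sub_div, one_div]
    linarith
  have hexp : ε ^ (-2 - (1 - β) / α) = ε ^ ((β - 1) / α) / ε ^ 2 := by
    rw [sub_eq_add_neg, Real.rpow_add hε, Real.rpow_neg hε.le, ← neg_div, neg_sub,
      Real.rpow_two]
    ring
  calc A / ε ^ 2 * h ^ (β - 1) + B * h⁻¹
      ≤ A / ε ^ 2 * (κ ^ (β - 1) * ε ^ ((β - 1) / α)) + B * (κ⁻¹ * ε ^ (-2 - (1 - β) / α)) := by
        gcongr
    _ = _ := by rw [hexp]; ring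

theorem exists_mlmc_parameters {T c₁ c₂ c₃ α β : ℝ} (hT : 0 < T) (hc₁ : 0 < c₁) (hc₂ : 0 < c₂)
    (hc₃ : 0 < c₃) (hα : 1 / 2 ≤ α) (hβ : β < 1) :
    ∃ c₄ > 0, ∀ ε, 0 < ε → ε ≤ 1 → ∃ (L : ℕ) (N : ℕ → ℕ), (∀ ℓ, 0 < N ℓ) ∧
      c₁ * (T / 2 ^ L) ^ α ≤ ε / 2 ∧
      ∑ ℓ ∈ range (L + 1), c₂ * (T / 2 ^ ℓ) ^ β / N ℓ ≤ ε ^ 2 / 4 ∧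
      ∑ ℓ ∈ range (L + 1), (N ℓ : ℝ) * (c₃ * (T / 2 ^ ℓ)⁻¹) ≤ c₄ * ε ^ (-2 - (1 - β) / α) := by
  obtain ⟨κ, hκ, hlevel⟩ := exists_level_bias_le_half hT hc₁ (by linarith : 0 < α)
  set ρ : ℝ := 2 ^ ((β - 1) / 2)
  have h1ρ : 0 < 1 - ρ := sub_pos.2 (Real.rpow_lt_one_of_one_lt_of_neg one_lt_two (by linarith))
  refine ⟨4 * (c₂ * c₃) / (1 - ρ) ^ 2 * κ ^ (β - 1) + 2 * c₃ * κ⁻¹, by positivity,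
    fun ε hε hε1 ↦ ?_⟩
  obtain ⟨L, hbias, hL⟩ := hlevel ε hε hε1
  obtain ⟨N, hN, hvar, hcost⟩ := exists_sample_sizes (range (L + 1))
    (v := fun ℓ ↦ c₂ * (T / 2 ^ ℓ) ^ β) (C := fun ℓ ↦ c₃ * (T / 2 ^ ℓ)⁻¹)
    (fun ℓ _ ↦ by positivity) (fun ℓ _ ↦ by positivity) hε
  refine ⟨L, N, hN, hbias, hvar, hcost.trans ?_⟩
  have hsqrt : ∑ ℓ ∈ range (L + 1), √(c₂ * (T / 2 ^ ℓ) ^ β * (c₃ * (T / 2 ^ ℓ)⁻¹))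
      ≤ √(c₂ * c₃) * ((T / 2 ^ L) ^ ((β - 1) / 2) / (1 - ρ)) := by
    simp_rw [sqrt_mul_rpow_mul_inv (show 0 < T / 2 ^ _ by positivity), ← mul_sum]
    exact mul_le_mul_of_nonneg_left (sum_range_succ_div_two_pow_rpow_le hT (by linarith) L)
      (Real.sqrt_nonneg _)
  have hinv : ∑ ℓ ∈ range (L + 1), c₃ * (T / 2 ^ ℓ)⁻¹ ≤ c₃ * ((T / 2 ^ L)⁻¹ / (1 - 2⁻¹)) := by
    simp_rw [← mul_sum, ← Real.rpow_neg_one]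
    exact mul_le_mul_of_nonneg_left (sum_range_succ_div_two_pow_rpow_le hT (by norm_num) L)
      hc₃.le
  calc 4 / ε ^ 2 * (∑ ℓ ∈ range (L + 1), √(c₂ * (T / 2 ^ ℓ) ^ β * (c₃ * (T / 2 ^ ℓ)⁻¹))) ^ 2
        + ∑ ℓ ∈ range (L + 1), c₃ * (T / 2 ^ ℓ)⁻¹
      ≤ 4 / ε ^ 2 * (√(c₂ * c₃) * ((T / 2 ^ L) ^ ((β - 1) / 2) / (1 - ρ))) ^ 2
        + c₃ * ((T / 2 ^ L)⁻¹ / (1 - 2⁻¹)) :=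
        add_le_add (mul_le_mul_of_nonneg_left (pow_le_pow_left₀
          (sum_nonneg fun _ _ ↦ Real.sqrt_nonneg _) hsqrt 2) (by positivity)) hinv
    _ = 4 * (c₂ * c₃) / (1 - ρ) ^ 2 / ε ^ 2 * (T / 2 ^ L) ^ (β - 1) + 2 * c₃ * (T / 2 ^ L)⁻¹ := by
      have hsq : ((T / 2 ^ L) ^ ((β - 1) / 2)) ^ 2 = (T / 2 ^ L) ^ (β - 1) := by
        rw [← Real.rpow_natCast, ← Real.rpow_mul (by positivity)]
        ring_nf
      rw [mul_pow, div_pow, Real.sq_sqrt (by positivity), hsq]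
      ring
    _ ≤ _ := div_sq_mul_rpow_add_mul_inv_le hκ hε hε1 hα hβ (by positivity) (by positivity) hL

theorem mlmc_complexity_beta_lt_one_general
    {Ω : Type*} [MeasurableSpace Ω] (μ : Measure Ω) [IsProbabilityMeasure μ]
    (T : ℝ) (hT : 0 < T)
    (P : Ω → ℝ)
    (Phat : ℕ → Ω → ℝ) (hPhatint : ∀ ℓ, Integrable (Phat ℓ) μ)
    (Y : ℕ → ℕ → Ω → ℝ)   -- `Y ℓ N` : the estimator `Ŷ_ℓ` built from `N` samples
    (h : ℕ → ℝ) (hh : ∀ ℓ, h ℓ = T / 2 ^ ℓ)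
    (c₁ c₂ c₃ α β : ℝ) (hc₁ : 0 < c₁) (hc₂ : 0 < c₂) (hc₃ : 0 < c₃)
    (hα : (1:ℝ)/2 ≤ α) (hβ1 : β < 1)
    (hYint : ∀ ℓ N, MemLp (Y ℓ N) 2 μ)
    (hindep : ∀ N : ℕ → ℕ, iIndepFun (fun ℓ => Y ℓ (N ℓ)) μ)
    (hbias : ∀ ℓ, |(∫ ω, Phat ℓ ω ∂μ) - ∫ ω, P ω ∂μ| ≤ c₁ * h ℓ ^ α)
    (hmean0 : ∀ N, ∫ ω, Y 0 N ω ∂μ = ∫ ω, Phat 0 ω ∂μ)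
    (hmean : ∀ ℓ N, 1 ≤ ℓ → ∫ ω, Y ℓ N ω ∂μ = ∫ ω, (Phat ℓ ω - Phat (ℓ - 1) ω) ∂μ)
    (hvar : ∀ ℓ N, 0 < N → variance (Y ℓ N) μ ≤ c₂ * (N : ℝ)⁻¹ * h ℓ ^ β) :
    ∃ c₄ : ℝ, 0 < c₄ ∧ ∀ ε : ℝ, 0 < ε → ε < Real.exp (-1) →
      ∃ (L : ℕ) (N : ℕ → ℕ), (∀ ℓ ≤ L, 0 < N ℓ) ∧
        (∫ ω, ((∑ ℓ ∈ Finset.range (L + 1), Y ℓ (N ℓ) ω) - ∫ ω', P ω' ∂μ) ^ 2 ∂μ < ε ^ 2) ∧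
        ∑ ℓ ∈ Finset.range (L + 1), c₃ * (N ℓ : ℝ) * (h ℓ)⁻¹ ≤ c₄ * ε ^ (-2 - (1 - β) / α) := by
  obtain rfl : h = fun ℓ ↦ T / 2 ^ ℓ := funext hh
  obtain ⟨c₄, hc₄, hparams⟩ := exists_mlmc_parameters hT hc₁ hc₂ hc₃ hα hβ1
  refine ⟨c₄, hc₄, fun ε hε hεe ↦ ?_⟩
  have hε1 : ε ≤ 1 := hεe.le.trans (Real.exp_le_one_iff.2 (by norm_num))
  obtain ⟨L, N, hN, hbiasL, hvarL, hcost⟩ := hparams ε hε hε1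
  refine ⟨L, N, fun ℓ _ ↦ hN ℓ, ?_, ?_⟩
  · rw [integral_sum_sub_const_sq_of_iIndepFun_s3 (p := fun ℓ ↦ ∫ ω, Phat ℓ ω ∂μ)
      (fun ℓ ↦ hYint ℓ (N ℓ)) (hindep N) (hmean0 _)
      (fun ℓ ↦ by rw [hmean _ _ (Nat.le_add_left 1 ℓ), Nat.add_sub_cancel,
        integral_sub (hPhatint _) (hPhatint _)])]
    have hvar' : ∑ ℓ ∈ range (L + 1), Var[Y ℓ (N ℓ); μ] ≤ ε ^ 2 / 4 :=
      (sum_le_sum fun ℓ _ ↦ (hvar ℓ _ (hN ℓ)).trans_eq (by ring)).trans hvarL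
    have hbias' : ((∫ ω, Phat L ω ∂μ) - ∫ ω, P ω ∂μ) ^ 2 ≤ (ε / 2) ^ 2 :=
      sq_le_sq' (by linarith [neg_abs_le ((∫ ω, Phat L ω ∂μ) - ∫ ω, P ω ∂μ), hbias L])
        ((le_abs_self _).trans ((hbias L).trans hbiasL))
    nlinarith
  · exact (sum_congr rfl fun ℓ _ ↦ by ring).trans_le hcost

/-- Multilevel Monte Carlo complexity theorem, case `0 < β < 1`:
with bias `|E[P̂_ℓ − P]| ≤ c₁ h_ℓ^α` (`α ≥ 1/2`), independent unbiased level estimators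
`Ŷ_ℓ` based on `N_ℓ` samples with `Var[Ŷ_ℓ] ≤ c₂ N_ℓ⁻¹ h_ℓ^β` (`0 < β < 1`), and level cost
`c₃ N_ℓ h_ℓ⁻¹`, there is `c₄` such that for every `ε < e⁻¹` one can choose `L` and `N_ℓ`
so that the combined estimator has mean square error below `ε²` at total cost `≤ c₄ ε^(−2−(1−β)/α)`. -/
theorem mlmc_complexity_beta_lt_one
    {Ω : Type*} [MeasurableSpace Ω] (μ : Measure Ω) [IsProbabilityMeasure μ]
    (T : ℝ) (hT : 0 < T)
    (P : Ω → ℝ) (hPint : Integrable P μ)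
    (Phat : ℕ → Ω → ℝ) (hPhatint : ∀ ℓ, Integrable (Phat ℓ) μ)
    (Y : ℕ → ℕ → Ω → ℝ)   -- `Y ℓ N` : the estimator `Ŷ_ℓ` built from `N` samples
    (h : ℕ → ℝ) (hh : ∀ ℓ, h ℓ = T / 2 ^ ℓ)
    (c₁ c₂ c₃ α β : ℝ) (hc₁ : 0 < c₁) (hc₂ : 0 < c₂) (hc₃ : 0 < c₃)
    (hα : (1:ℝ)/2 ≤ α) (hβ0 : 0 < β) (hβ1 : β < 1)
    (hYint : ∀ ℓ N, MemLp (Y ℓ N) 2 μ)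
    (hindep : ∀ N : ℕ → ℕ, iIndepFun (fun ℓ => Y ℓ (N ℓ)) μ)
    (hbias : ∀ ℓ, |(∫ ω, Phat ℓ ω ∂μ) - ∫ ω, P ω ∂μ| ≤ c₁ * h ℓ ^ α)
    (hmean0 : ∀ N, ∫ ω, Y 0 N ω ∂μ = ∫ ω, Phat 0 ω ∂μ)
    (hmean : ∀ ℓ N, 1 ≤ ℓ → ∫ ω, Y ℓ N ω ∂μ = ∫ ω, (Phat ℓ ω - Phat (ℓ - 1) ω) ∂μ)
    (hvar : ∀ ℓ N, 0 < N → variance (Y ℓ N) μ ≤ c₂ * (N : ℝ)⁻¹ * h ℓ ^ β) :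
    ∃ c₄ : ℝ, 0 < c₄ ∧ ∀ ε : ℝ, 0 < ε → ε < Real.exp (-1) →
      ∃ (L : ℕ) (N : ℕ → ℕ), (∀ ℓ ≤ L, 0 < N ℓ) ∧
        (∫ ω, ((∑ ℓ ∈ Finset.range (L + 1), Y ℓ (N ℓ) ω) - ∫ ω', P ω' ∂μ) ^ 2 ∂μ < ε ^ 2) ∧
        ∑ ℓ ∈ Finset.range (L + 1), c₃ * (N ℓ : ℝ) * (h ℓ)⁻¹ ≤ c₄ * ε ^ (-2 - (1 - β) / α) :=
  mlmc_complexity_beta_lt_one_general μ T hT P Phat hPhatint Y h hh c₁ c₂ c₃ α β hc₁ hc₂ hc₃ hα hβ1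
    hYint hindep hbias hmean0 hmean hvar
end
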